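/- arXiv:math/0609051 — 4 statements merged into one kernel-verified Lean document; each statement's English description precedes it below -/
import Mathlib

section
/- Shift formula (Equation 7). For all integers n ≥ 1, b ≥ 1, and every integer m ≥ n − 1: N_{[0,b]}(n,m) = N_{[1, b−1]}(n, m − n + 1). (When b = 1 the gain interval [1,0] is empty, so the right-hand side counts all maps x : {1,…,n} → {1,…,m−n+1} with no constraints.) -/
open Finset

/-- `latticeCount a b n m` is `N_{[a,b]}(n,m)`: the number of maps `x : {1, …, n} → ℤ` with
`1 ≤ x i ≤ m` for all `i` and `x j ≠ x i + g` for all `i < j` and all gains `g` with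
`a ≤ g ≤ b`.  Equivalently, the number of integer points of the cube `[1, m]^n` lying on none
of the affinographic hyperplanes `x j = x i + g` (`i < j`, `a ≤ g ≤ b`). -/
noncomputable def latticeCount (a b : ℤ) (n : ℕ) (m : ℤ) : ℕ :=
  Nat.card {x : Fin n → ℤ // (∀ v, 1 ≤ x v ∧ x v ≤ m) ∧
    ∀ i j : Fin n, i < j → ∀ g : ℤ, a ≤ g → g ≤ b → x j ≠ x i + g}

/-- `eulerianNumber n r` is the Eulerian number `A(n, r + 1)`: the number of permutations `σ`
of `{1, …, n}` with exactly `r` ascents, an ascent being an index `1 ≤ i ≤ n − 1` with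
`σ(i) < σ(i+1)`. -/
noncomputable def eulerianNumber (n r : ℕ) : ℕ :=
  Nat.card {σ : Equiv.Perm (Fin n) //
    Nat.card {i : ℕ // ∃ h1 : i + 1 < n,
      σ ⟨i, Nat.lt_of_succ_lt h1⟩ < σ ⟨i + 1, h1⟩} = r}

/-- The binomial coefficient `C(t, n)` for an integer `t`, interpreted as `0` when `t < n`
(in particular when `t < 0`). -/
def intChoose (t : ℤ) (n : ℕ) : ℕ := t.toNat.choose n

/-! The bijection is `x ↦ x - rank x`, subtracting from each coordinate the number of smaller
coordinates. A point avoiding the gains `[0, b]` is injective, and whenever `i < j` and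
`x i < x j`, the gap `x j - x i` exceeds `b` by at least the number of coordinates in
`[x i, x j)`; after the shift such pairs still differ by at least `b`, while pairs with `i < j`
and `x i > x j` may collide. The inverse adds back the rank for the order "by value, ties broken
by the larger index first", which is exactly the order of the original coordinates. -/

open Function OrderDual

section Rank

variable {ι α β : Type*} [LinearOrder α] [LinearOrder β]

theorem lt_iff_lt_of_forall_lt_imp {f : ι → α} {g : ι → β} (hf : Injective f)
    (h : ∀ i j, f j < f i → g j < g i) (i j : ι) : g j < g i ↔ f j < f i := by
  refine ⟨fun hg => ?_, h i j⟩
  rcases lt_trichotomy (f j) (f i) with hlt | heq | hgt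
  · exact hlt
  · exact absurd hg (by rw [hf heq]; exact lt_irrefl _)
  · exact absurd (h j i hgt) hg.not_gt

variable [Fintype ι]

def rank (f : ι → α) (i : ι) : ℕ := #{j | f j < f i}

theorem rank_lt_rank {f : ι → α} {i j : ι} (h : f j < f i) : rank f j < rank f i := by
  refine card_lt_card ((ssubset_iff_of_subset fun l hl => ?_).2 ⟨j, ?_, ?_⟩)
  · simp only [mem_filter, mem_univ, true_and] at hl ⊢
    exact hl.trans h
  · simpa using h
  · simp

theorem rank_lt_card (f : ι → α) (i : ι) : rank f i < Fintype.card ι :=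
  card_lt_univ_of_notMem (x := i) (by simp)

theorem rank_congr {f : ι → α} {g : ι → β} (h : ∀ i j, g j < g i ↔ f j < f i) :
    rank g = rank f := by
  funext i
  simp only [rank, h]

end Rank

section IntRank

variable {ι : Type*} [Fintype ι] {x : ι → ℤ}

theorem card_filter_mem_Ico_le (hx : Injective x) (a c : ℤ) :
    #{l | x l ∈ Ico a c} ≤ (c - a).toNat :=
  (card_le_card_of_injOn x (fun l hl => by simpa using hl) hx.injOn).trans (Int.card_Ico a c).le

theorem rank_le_sub_of_forall_le (hx : Injective x) {a : ℤ} (hlow : ∀ l, a ≤ x l) (i : ι) :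
    (rank x i : ℤ) ≤ x i - a := by
  have hsub : rank x i ≤ #{l | x l ∈ Ico a (x i)} :=
    card_le_card fun l => by simpa using fun hl => ⟨hlow l, hl⟩
  have := card_filter_mem_Ico_le hx a (x i)
  have := hlow i
  omega

theorem card_le_rank_add_of_forall_le (hx : Injective x) {c : ℤ} (hhigh : ∀ l, x l ≤ c)
    (i : ι) : (Fintype.card ι : ℤ) ≤ rank x i + (c - x i + 1) := by
  have hsplit : rank x i + #{l | ¬x l < x i} = Fintype.card ι :=
    card_filter_add_card_filter_not _
  have hsub : #{l | ¬x l < x i} ≤ #{l | x l ∈ Ico (x i) (c + 1)} :=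
    card_le_card fun l => by simpa using fun hl => ⟨hl, by linarith [hhigh l]⟩
  have := card_filter_mem_Ico_le hx (x i) (c + 1)
  have := hhigh i
  omega

theorem rank_le_rank_add (hx : Injective x) {k j : ι} (h : x k ≤ x j) :
    (rank x j : ℤ) ≤ rank x k + (x j - x k) := by
  classical
  have hsub : (univ.filter fun l => x l < x j) ⊆
      (univ.filter fun l => x l < x k) ∪ univ.filter fun l => x l ∈ Ico (x k) (x j) := by
    intro l
    simp only [mem_union, mem_filter, mem_univ, true_and, mem_Ico]
    omega
  have : rank x j ≤ rank x k + #{l | x l ∈ Ico (x k) (x j)} :=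
    (card_le_card hsub).trans (card_union_le _ _)
  have := card_filter_mem_Ico_le hx (x k) (x j)
  omega

theorem exists_rank_eq_rank_add_one (hx : Injective x) {i j : ι} (h : x i < x j) :
    ∃ k, x i ≤ x k ∧ x k < x j ∧ rank x j = rank x k + 1 := by
  classical
  obtain ⟨k, hk, hmax⟩ :=
    exists_max_image {l | x i ≤ x l ∧ x l < x j} x ⟨i, by simpa using h⟩
  simp only [mem_filter, mem_univ, true_and] at hk hmax
  refine ⟨k, hk.1, hk.2, ?_⟩
  have hinsert :
      (univ.filter fun l => x l < x j) = insert k (univ.filter fun l => x l < x k) := by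
    ext l
    simp only [mem_insert, mem_filter, mem_univ, true_and]
    constructor
    · intro hl
      by_cases hil : x i ≤ x l
      · exact (hmax l ⟨hil, hl⟩).eq_or_lt.imp_left (hx ·)
      · exact Or.inr ((not_le.1 hil).trans_le hk.1)
    · rintro (rfl | hl)
      exacts [hk.2, hl.trans hk.2]
  rw [rank, hinsert, card_insert_of_notMem (by simp)]
  rfl

end IntRank

section LexTag

variable {ι : Type*} {y : ι → ℤ} {i j : ι}

def lexTag (y : ι → ℤ) (i : ι) : ℤ ×ₗ ιᵒᵈ := toLex (y i, toDual i)

theorem lexTag_injective (y : ι → ℤ) : Injective (lexTag y) := fun i j h => by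
  simpa [lexTag] using congrArg (fun p => (ofLex p).2) h

variable [LinearOrder ι]

theorem lexTag_lt_lexTag_iff : lexTag y j < lexTag y i ↔ y j < y i ∨ y j = y i ∧ i < j := by
  simp [lexTag, Prod.Lex.toLex_lt_toLex]

theorem lexTag_lt_lexTag_of_lt (h : y j < y i) : lexTag y j < lexTag y i :=
  lexTag_lt_lexTag_iff.2 (Or.inl h)

theorem rank_lexTag_of_injective [Fintype ι] (hy : Injective y) : rank (lexTag y) = rank y :=
  rank_congr (lt_iff_lt_of_forall_lt_imp hy fun _ _ => lexTag_lt_lexTag_of_lt)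

end LexTag

section AvoidsGains

variable {ι : Type*} [LinearOrder ι] {a b : ℤ} {x : ι → ℤ} {i j : ι}

def AvoidsGains (a b : ℤ) (x : ι → ℤ) : Prop :=
  ∀ i j : ι, i < j → ∀ g : ℤ, a ≤ g → g ≤ b → x j ≠ x i + g

theorem AvoidsGains.add_lt (hx : AvoidsGains 0 b x) (hij : i < j) (h : x i ≤ x j) :
    x i + b < x j := by
  by_contra! hle
  exact hx i j hij (x j - x i) (by omega) (by omega) (by ring)

theorem AvoidsGains.add_le (hx : AvoidsGains 1 (b - 1) x) (hij : i < j) (h : x i < x j) :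
    x i + b ≤ x j := by
  by_contra! hlt
  exact hx i j hij (x j - x i) (by omega) (by omega) (by ring)

theorem AvoidsGains.injective (hb : 0 ≤ b) (hx : AvoidsGains 0 b x) : Injective x := by
  intro i j h
  by_contra hne
  rcases lt_or_gt_of_ne hne with hij | hji
  · linarith [hx.add_lt hij h.le]
  · linarith [hx.add_lt hji h.ge]

-- Induction along the predecessor `k` of `x j`: a step with `k < j` raises the value by more
-- than `b`, any other step by at least `1`.
theorem AvoidsGains.rank_add_le [Fintype ι] (hb : 0 ≤ b) (hx : AvoidsGains 0 b x) {i j : ι}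
    (hij : i < j) (h : x i < x j) : (rank x j : ℤ) + b ≤ rank x i + (x j - x i) := by
  have hinj := hx.injective hb
  obtain ⟨k, hik, hkj, hrank⟩ := exists_rank_eq_rank_add_one hinj h
  rcases lt_or_gt_of_ne (ne_of_apply_ne x hkj.ne) with hk | hk
  · have := hx.add_lt hk hkj.le
    have := rank_le_rank_add hinj hik
    omega
  · have hik_lt : i < k := hij.trans hk
    have := hx.rank_add_le hb hik_lt (hik.lt_of_ne (hinj.ne hik_lt.ne))
    omega
termination_by (x j - x i).toNat
decreasing_by omega

end AvoidsGains

section Shift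

variable {ι : Type*} [LinearOrder ι] [Fintype ι] {b m : ℤ}

def shiftUp (y : ι → ℤ) (i : ι) : ℤ := y i + rank (lexTag y) i

def shiftDown (x : ι → ℤ) (i : ι) : ℤ := x i - rank (lexTag x) i

theorem shiftUp_lt_shiftUp {y : ι → ℤ} {i j : ι} (h : lexTag y j < lexTag y i) :
    shiftUp y j < shiftUp y i := by
  have hrank : rank (lexTag y) j < rank (lexTag y) i := rank_lt_rank h
  have hle : y j ≤ y i := by rcases lexTag_lt_lexTag_iff.1 h with h | h <;> omega
  simp only [shiftUp]
  omega

theorem rank_lexTag_shiftUp (y : ι → ℤ) : rank (lexTag (shiftUp y)) = rank (lexTag y) :=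
  rank_congr (lt_iff_lt_of_forall_lt_imp (lexTag_injective y)
    fun _ _ h => lexTag_lt_lexTag_of_lt (shiftUp_lt_shiftUp h))

theorem shiftDown_shiftUp (y : ι → ℤ) : shiftDown (shiftUp y) = y := by
  funext i
  simp only [shiftDown, rank_lexTag_shiftUp, shiftUp, add_sub_cancel_right]

theorem shiftUp_mem_Icc {y : ι → ℤ} (hy : ∀ v, 1 ≤ y v ∧ y v ≤ m - Fintype.card ι + 1)
    (v : ι) : shiftUp y v ∈ Set.Icc 1 m := by
  have := rank_lt_card (lexTag y) v
  have := hy v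
  simp only [shiftUp, Set.mem_Icc]
  omega

theorem avoidsGains_shiftUp {y : ι → ℤ} (hy : AvoidsGains 1 (b - 1) y) :
    AvoidsGains 0 b (shiftUp y) := by
  intro i j hij g hg0 hgb heq
  have hji : ¬lexTag y j < lexTag y i := fun h => by linarith [shiftUp_lt_shiftUp h]
  have hij' : lexTag y i < lexTag y j :=
    ((lexTag_injective y).ne hij.ne).lt_or_gt.resolve_right hji
  have hyij : y i < y j := by
    rcases lexTag_lt_lexTag_iff.1 hij' with h | ⟨_, h⟩
    exacts [h, absurd h hij.not_gt]
  have := hy.add_le hij hyij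
  have := rank_lt_rank hij'
  simp only [shiftUp] at heq
  omega

variable {x : ι → ℤ} (hb : 1 ≤ b) (hx : AvoidsGains 0 b x)
include hb hx

theorem AvoidsGains.shiftDown_eq (i : ι) : shiftDown x i = x i - rank x i := by
  rw [shiftDown, rank_lexTag_of_injective (hx.injective (by omega))]

theorem AvoidsGains.lexTag_shiftDown_lt {i j : ι} (h : x j < x i) :
    lexTag (shiftDown x) j < lexTag (shiftDown x) i := by
  rw [lexTag_lt_lexTag_iff, hx.shiftDown_eq hb, hx.shiftDown_eq hb]
  rcases lt_or_gt_of_ne (ne_of_apply_ne x h.ne) with hji | hij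
  · have := hx.rank_add_le (by omega) hji h
    left
    omega
  · have := rank_le_rank_add (hx.injective (by omega)) h.le
    rcases (show x j - rank x j ≤ x i - rank x i by omega).lt_or_eq with hlt | heq
    exacts [Or.inl hlt, Or.inr ⟨heq, hij⟩]

theorem AvoidsGains.rank_lexTag_shiftDown : rank (lexTag (shiftDown x)) = rank (lexTag x) := by
  have hinj := hx.injective (by omega)
  rw [rank_lexTag_of_injective hinj]
  exact rank_congr (lt_iff_lt_of_forall_lt_imp hinj fun _ _ => hx.lexTag_shiftDown_lt hb)

theorem AvoidsGains.shiftUp_shiftDown : shiftUp (shiftDown x) = x := by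
  funext i
  simp only [shiftUp, hx.rank_lexTag_shiftDown hb, shiftDown, sub_add_cancel]

theorem AvoidsGains.shiftDown_mem_Icc (hbound : ∀ v, 1 ≤ x v ∧ x v ≤ m) (v : ι) :
    shiftDown x v ∈ Set.Icc 1 (m - Fintype.card ι + 1) := by
  have hinj := hx.injective (by omega)
  have := rank_le_sub_of_forall_le hinj (fun l => (hbound l).1) v
  have := card_le_rank_add_of_forall_le hinj (fun l => (hbound l).2) v
  rw [hx.shiftDown_eq hb, Set.mem_Icc]
  omega

theorem avoidsGains_shiftDown : AvoidsGains 1 (b - 1) (shiftDown x) := by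
  intro i j hij g hg1 hgb heq
  have hinj := hx.injective (by omega)
  rw [hx.shiftDown_eq hb, hx.shiftDown_eq hb] at heq
  rcases lt_or_gt_of_ne (hinj.ne hij.ne) with hlt | hgt
  · have := hx.rank_add_le (by omega) hij hlt
    omega
  · have := rank_le_rank_add hinj hgt.le
    omega

end Shift

def shiftEquiv {ι : Type*} [LinearOrder ι] [Fintype ι] {b : ℤ} (hb : 1 ≤ b) (m : ℤ) :
    {x : ι → ℤ // (∀ v, 1 ≤ x v ∧ x v ≤ m) ∧ AvoidsGains 0 b x} ≃
      {y : ι → ℤ //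
        (∀ v, 1 ≤ y v ∧ y v ≤ m - Fintype.card ι + 1) ∧ AvoidsGains 1 (b - 1) y} where
  toFun x := ⟨shiftDown x, x.2.2.shiftDown_mem_Icc hb x.2.1, avoidsGains_shiftDown hb x.2.2⟩
  invFun y := ⟨shiftUp y, shiftUp_mem_Icc y.2.1, avoidsGains_shiftUp y.2.2⟩
  left_inv x := Subtype.ext (x.2.2.shiftUp_shiftDown hb)
  right_inv y := Subtype.ext (shiftDown_shiftUp y.1)

theorem shift_formula_general (n : ℕ) (b : ℤ) (hb : 1 ≤ b) (m : ℤ) :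
    latticeCount 0 b n m = latticeCount 1 (b - 1) n (m - n + 1) := by
  have h := Nat.card_congr (shiftEquiv (ι := Fin n) hb m)
  rw [Fintype.card_fin] at h
  exact h

/-- **Shift formula** (Equation 7).  For `n ≥ 1`, `b ≥ 1`, and every integer `m ≥ n − 1`:
`N_{[0,b]}(n, m) = N_{[1, b−1]}(n, m − n + 1)`.  (When `b = 1` the gain interval `[1, 0]` is
empty, so the right-hand side counts all maps `x : {1, …, n} → {1, …, m − n + 1}`.) -/
theorem shift_formula (n : ℕ) (hn : 1 ≤ n) (b : ℤ) (hb : 1 ≤ b) (m : ℤ)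
    (hm : (n : ℤ) - 1 ≤ m) :
    latticeCount 0 b n m = latticeCount 1 (b - 1) n (m - n + 1) :=
  shift_formula_general n b hb m
end

section
/- Eulerian formula for gain interval [1,b−1]. For all integers n ≥ 2, b ≥ 1, and m ≥ 0: N_{[1, b−1]}(n,m) = ∑_{r=0}^{n−1} A(n, r+1) · C(m + n − 1 − b·r, n). This counts the integer points of [1,m]^n lying on none of the hyperplanes x_j = x_i + g (1 ≤ i < j ≤ n, 1 ≤ g ≤ b−1). -/
/-!
Sort a solution `x` by value, breaking ties by decreasing index. This gives a unique permutation
`σ` and a weakly increasing `y = x ∘ σ`, and the gain constraints say exactly that `y` jumps by at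
least `b` at every ascent of `σ`. Removing these mandatory jumps and adding the position turns `y`
into a strictly increasing sequence in `[1, m + n - 1 - b · asc σ]`, and there are
`C(m + n - 1 - b · asc σ, n)` of those.
-/

open Finset

theorem card_strictMono_tuples {α : Type*} [LinearOrder α] (k : ℕ) (s : Set α) :
    Nat.card {w : Fin k → α // StrictMono w ∧ ∀ v, w v ∈ s} = (Nat.card s).choose k := by
  let e : {w : Fin k → α // StrictMono w ∧ ∀ v, w v ∈ s} ≃ (Fin k ↪o s) :=
    { toFun w := OrderEmbedding.ofStrictMono (fun v => ⟨w.1 v, w.2.2 v⟩) fun _ _ h => w.2.1 h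
      invFun f := ⟨fun v => f v, fun _ _ h => f.strictMono h, fun v => (f v).2⟩
      left_inv _ := rfl
      right_inv _ := rfl }
  rw [Nat.card_congr (e.trans Set.powersetCard.ofFinEmbEquiv), Set.powersetCard.card]

section GappedTuples

variable {N : ℕ}

theorem Monotone.forall_mem_Icc_iff {α : Type*} [Preorder α] {f : Fin (N + 1) → α}
    (hf : Monotone f) {a b : α} :
    (∀ v, f v ∈ Set.Icc a b) ↔ a ≤ f 0 ∧ f (Fin.last N) ≤ b :=
  ⟨fun h => ⟨(h 0).1, (h _).2⟩, fun h v =>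
    ⟨h.1.trans (hf (Fin.zero_le v)), (hf (Fin.le_last v)).trans h.2⟩⟩

theorem monotone_of_add_le_succ {y : Fin (N + 1) → ℤ} {g : Fin N → ℤ} (hg : 0 ≤ g)
    (hy : ∀ i, y i.castSucc + g i ≤ y i.succ) : Monotone y :=
  Fin.monotone_iff_le_succ.2 fun i => (le_add_of_nonneg_right (hg i)).trans (hy i)

theorem Fin.partialSum_last {M : Type*} [AddCommMonoid M] (f : Fin N → M) :
    Fin.partialSum f (Fin.last N) = ∑ i, f i := by
  rw [Fin.partialSum, Fin.val_last, List.take_of_length_le (by simp), List.sum_ofFn]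

theorem card_gapped_tuples (g : Fin N → ℤ) (hg : 0 ≤ g) (m : ℤ) :
    Nat.card {y : Fin (N + 1) → ℤ //
        (∀ v, y v ∈ Set.Icc 1 m) ∧ ∀ i, y i.castSucc + g i ≤ y i.succ} =
      (m + N - ∑ i, g i).toNat.choose (N + 1) := by
  -- `y + c` removes the mandatory gaps and adds the position, making the gaps strict
  let c : Fin (N + 1) → ℤ := fun v => v - Fin.partialSum g v
  have hgap (y : Fin (N + 1) → ℤ) :
      (∀ i, y i.castSucc + g i ≤ y i.succ) ↔ StrictMono (y + c) := by
    rw [Fin.strictMono_iff_lt_succ]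
    refine forall_congr' fun i => ?_
    simp only [Pi.add_apply, c, Fin.partialSum_succ, Fin.val_succ, Fin.val_castSucc]
    push_cast
    omega
  have hbox (y : Fin (N + 1) → ℤ) (hy : ∀ i, y i.castSucc + g i ≤ y i.succ) :
      (∀ v, y v ∈ Set.Icc 1 m) ↔ ∀ v, (y + c) v ∈ Set.Icc 1 (m + N - ∑ i, g i) := by
    rw [(monotone_of_add_le_succ hg hy).forall_mem_Icc_iff,
      ((hgap y).1 hy).monotone.forall_mem_Icc_iff]
    simp only [Pi.add_apply, c, Fin.partialSum_zero, Fin.partialSum_last, Fin.val_zero,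
      Fin.val_last]
    push_cast
    constructor <;> rintro ⟨h₀, h₁⟩ <;> constructor <;> linarith
  have hiff (y : Fin (N + 1) → ℤ) :
      ((∀ v, y v ∈ Set.Icc 1 m) ∧ ∀ i, y i.castSucc + g i ≤ y i.succ) ↔
        StrictMono (y + c) ∧ ∀ v, (y + c) v ∈ Set.Icc 1 (m + N - ∑ i, g i) :=
    ⟨fun ⟨hyI, hy⟩ => ⟨(hgap y).1 hy, (hbox y hy).1 hyI⟩,
      fun ⟨hw, hwI⟩ => ⟨(hbox y ((hgap y).2 hw)).2 hwI, (hgap y).2 hw⟩⟩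
  rw [Nat.card_congr ((Equiv.addRight c).subtypeEquiv
    (q := fun w => StrictMono w ∧ ∀ v, w v ∈ Set.Icc 1 (m + N - ∑ i, g i)) hiff),
    card_strictMono_tuples]
  simp

end GappedTuples

section Sorting

variable {N : ℕ}

theorem Fin.exists_castSucc_lt_succ_of_lt {α : Type*} [LinearOrder α] {f : Fin (N + 1) → α}
    {k l : Fin (N + 1)} (hkl : k ≤ l) (h : f k < f l) :
    ∃ i : Fin N, k ≤ i.castSucc ∧ i.succ ≤ l ∧ f i.castSucc < f i.succ := by
  by_contra! hdesc
  have hle (j : Fin (N + 1)) : k ≤ j → j ≤ l → f j ≤ f k := by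
    induction j using Fin.induction with
    | zero => intro hk _; rw [Fin.le_zero_iff.1 hk]
    | succ i ih =>
      intro hk hl
      by_cases hki : k ≤ i.castSucc
      · exact (hdesc i hki hl).trans (ih hki (Fin.castSucc_lt_succ.le.trans hl))
      · rw [le_antisymm hk (Fin.castSucc_lt_iff_succ_le.1 (not_le.1 hki))]
  exact (hle l hkl le_rfl).not_gt h

/-- The mandatory jump of `y = x ∘ σ` between positions `i` and `i + 1`. -/
def ascentGap (b : ℤ) (σ : Equiv.Perm (Fin (N + 1))) (i : Fin N) : ℤ :=
  if σ i.castSucc < σ i.succ then b else 0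

def ascentCount (σ : Equiv.Perm (Fin (N + 1))) : ℕ :=
  #{i : Fin N | σ i.castSucc < σ i.succ}

theorem sum_ascentGap (b : ℤ) (σ : Equiv.Perm (Fin (N + 1))) :
    ∑ i, ascentGap b σ i = b * ascentCount σ := by
  simp [ascentGap, ascentCount, sum_ite, mul_comm]

theorem ascentCount_lt (σ : Equiv.Perm (Fin (N + 1))) : ascentCount σ < N + 1 :=
  Nat.lt_succ_of_le ((card_filter_le _ _).trans (by simp))

theorem ascentGap_nonneg {b : ℤ} (hb : 0 ≤ b) (σ : Equiv.Perm (Fin (N + 1))) :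
    0 ≤ ascentGap b σ := fun i => by
  unfold ascentGap; split_ifs <;> simp [hb]

def IsGainSeparated {n : ℕ} (b : ℤ) (x : Fin n → ℤ) : Prop :=
  ∀ i j, i < j → x j ≤ x i ∨ x i + b ≤ x j

/-- Ties are broken by decreasing index, so that equal values are read off as descents. -/
def sortKey {n : ℕ} {α : Type*} (x : Fin n → α) (i : Fin n) : α ×ₗ (Fin n)ᵒᵈ :=
  toLex (x i, OrderDual.toDual i)

theorem sortKey_injective {n : ℕ} {α : Type*} (x : Fin n → α) : Function.Injective (sortKey x) :=
  fun _ _ h => by simpa [sortKey] using congrArg (fun p => (ofLex p).2) h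

variable {b : ℤ} {σ : Equiv.Perm (Fin (N + 1))} {y : Fin (N + 1) → ℤ}

theorem isGainSeparated_comp_symm (hb : 0 ≤ b)
    (hy : ∀ i, y i.castSucc + ascentGap b σ i ≤ y i.succ) :
    IsGainSeparated b (y ∘ σ.symm) := by
  have hmono := monotone_of_add_le_succ (ascentGap_nonneg hb σ) hy
  intro i j hij
  simp only [Function.comp_apply]
  rcases le_or_gt (σ.symm j) (σ.symm i) with hle | hlt
  · exact Or.inl (hmono hle)
  · obtain ⟨p, hkp, hpl, hasc⟩ := Fin.exists_castSucc_lt_succ_of_lt (f := σ) hlt.le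
      (by simpa using hij)
    have hjump := hy p
    rw [ascentGap, if_pos hasc] at hjump
    exact Or.inr (by linarith [hmono hkp, hmono hpl])

theorem eq_sort_sortKey (hb : 0 < b) (hy : ∀ i, y i.castSucc + ascentGap b σ i ≤ y i.succ) :
    σ = Tuple.sort (sortKey (y ∘ σ.symm)) := by
  refine Tuple.eq_sort_iff.2 ⟨Fin.monotone_iff_le_succ.2 fun i => ?_,
    fun i j hij h => absurd (sortKey_injective _ h) (σ.injective.ne hij.ne)⟩
  have hjump := hy i
  simp only [Function.comp_apply, sortKey, Equiv.symm_apply_apply, Prod.Lex.toLex_le_toLex,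
    OrderDual.toDual_le_toDual]
  unfold ascentGap at hjump
  split_ifs at hjump with hasc
  · exact Or.inl (by linarith)
  · exact (lt_or_eq_of_le (by linarith)).imp_right fun h => ⟨h, not_lt.1 hasc⟩

theorem add_ascentGap_le_of_sort {x : Fin (N + 1) → ℤ} (hx : IsGainSeparated b x) (i : Fin N) :
    (x ∘ Tuple.sort (sortKey x)) i.castSucc + ascentGap b (Tuple.sort (sortKey x)) i ≤
      (x ∘ Tuple.sort (sortKey x)) i.succ := by
  have hkey := Fin.monotone_iff_le_succ.1 (Tuple.monotone_sort (sortKey x)) i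
  simp only [Function.comp_apply, sortKey, Prod.Lex.toLex_le_toLex,
    OrderDual.toDual_le_toDual] at hkey ⊢
  unfold ascentGap
  split_ifs with hasc
  · rcases hkey with hlt | ⟨-, hge⟩
    · exact (hx _ _ hasc).resolve_left hlt.not_ge
    · exact absurd hasc hge.not_gt
  · simpa using hkey.elim le_of_lt fun h => h.1.le

end Sorting

section Counting

variable {N : ℕ}

instance {n : ℕ} (m : ℤ) (P : (Fin n → ℤ) → Prop) :
    Finite {y : Fin n → ℤ // (∀ v, y v ∈ Set.Icc 1 m) ∧ P y} :=
  Finite.of_injective (fun y v => (⟨y.1 v, y.2.1 v⟩ : Set.Icc 1 m)) fun _ _ h =>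
    Subtype.ext (funext fun v => congrArg Subtype.val (congrFun h v))

def sigmaGappedEquiv {b : ℤ} (hb : 0 < b) (m : ℤ) :
    (Σ σ : Equiv.Perm (Fin (N + 1)), {y : Fin (N + 1) → ℤ //
        (∀ v, y v ∈ Set.Icc 1 m) ∧ ∀ i, y i.castSucc + ascentGap b σ i ≤ y i.succ}) ≃
      {x : Fin (N + 1) → ℤ // (∀ v, x v ∈ Set.Icc 1 m) ∧ IsGainSeparated b x} where
  toFun p := ⟨p.2.1 ∘ p.1.symm, fun _ => p.2.2.1 _, isGainSeparated_comp_symm hb.le p.2.2.2⟩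
  invFun x := ⟨Tuple.sort (sortKey x.1), x.1 ∘ Tuple.sort (sortKey x.1), fun _ => x.2.1 _,
    add_ascentGap_le_of_sort x.2.2⟩
  left_inv := by
    rintro ⟨σ, y, hy⟩
    have hσ := eq_sort_sortKey hb hy.2
    refine Sigma.subtype_ext hσ.symm ?_
    ext v
    simp [← hσ]
  right_inv x := Subtype.ext (funext fun v => by simp)

theorem forall_ne_add_iff (u v b : ℤ) :
    (∀ g : ℤ, 1 ≤ g → g ≤ b - 1 → v ≠ u + g) ↔ v ≤ u ∨ u + b ≤ v :=
  ⟨fun h => by by_contra! H; exact h (v - u) (by omega) (by omega) (by ring),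
    fun h _ _ _ => by omega⟩

theorem latticeCount_eq_card_isGainSeparated (b : ℤ) (n : ℕ) (m : ℤ) :
    latticeCount 1 (b - 1) n m =
      Nat.card {x : Fin n → ℤ // (∀ v, x v ∈ Set.Icc 1 m) ∧ IsGainSeparated b x} :=
  Nat.card_congr (Equiv.subtypeEquivRight fun x => and_congr Iff.rfl
    (forall₃_congr fun i j _ => forall_ne_add_iff (x i) (x j) b))

theorem eulerianNumber_succ (r : ℕ) :
    eulerianNumber (N + 1) r = #{σ : Equiv.Perm (Fin (N + 1)) | ascentCount σ = r} := by
  have hasc (σ : Equiv.Perm (Fin (N + 1))) :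
      Nat.card {i : ℕ // ∃ h : i + 1 < N + 1, σ ⟨i, Nat.lt_of_succ_lt h⟩ < σ ⟨i + 1, h⟩} =
        ascentCount σ := by
    rw [ascentCount, ← Fintype.card_subtype, ← Nat.card_eq_fintype_card]
    exact Nat.card_congr
      { toFun i := ⟨⟨i.1, Nat.lt_of_succ_lt_succ i.2.fst⟩, i.2.snd⟩
        invFun i := ⟨i.1, by omega, i.2⟩
        left_inv _ := rfl
        right_inv _ := rfl }
  simp only [eulerianNumber, hasc, Nat.card_eq_fintype_card, Fintype.card_subtype]

end Counting

theorem eulerian_formula_positive_gains_general (n : ℕ) (hn : 2 ≤ n) (b : ℤ) (hb : 1 ≤ b)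
    (m : ℤ) :
    latticeCount 1 (b - 1) n m =
      ∑ r ∈ Finset.range n, eulerianNumber n r * intChoose (m + n - 1 - b * r) n := by
  obtain ⟨N, rfl⟩ : ∃ N, n = N + 1 := ⟨n - 1, by omega⟩
  have hfiber (σ : Equiv.Perm (Fin (N + 1))) :
      Nat.card {y : Fin (N + 1) → ℤ //
          (∀ v, y v ∈ Set.Icc 1 m) ∧ ∀ i, y i.castSucc + ascentGap b σ i ≤ y i.succ} =
        intChoose (m + ↑(N + 1) - 1 - b * ascentCount σ) (N + 1) := by
    rw [card_gapped_tuples _ (ascentGap_nonneg (by omega) σ), sum_ascentGap, intChoose]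
    congr 3
    push_cast
    ring
  rw [latticeCount_eq_card_isGainSeparated, ← Nat.card_congr (sigmaGappedEquiv (by omega) m),
    Nat.card_sigma]
  simp only [hfiber]
  rw [← sum_fiberwise_of_maps_to (t := range (N + 1)) fun σ _ => mem_range.2 (ascentCount_lt σ)]
  refine sum_congr rfl fun r _ => ?_
  rw [eulerianNumber_succ, ← smul_eq_mul, ← sum_const]
  exact sum_congr rfl fun σ hσ => by rw [(mem_filter.1 hσ).2]

/-- **Eulerian formula for gain interval `[1, b−1]`.**  For `n ≥ 2`, `b ≥ 1`, and `m ≥ 0`: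
`N_{[1, b−1]}(n, m) = ∑_{r=0}^{n−1} A(n, r+1) C(m + n − 1 − b r, n)`.  This counts the integer
points of `[1, m]^n` lying on none of the hyperplanes `x j = x i + g` (`1 ≤ i < j ≤ n`,
`1 ≤ g ≤ b − 1`). -/
theorem eulerian_formula_positive_gains (n : ℕ) (hn : 2 ≤ n) (b : ℤ) (hb : 1 ≤ b)
    (m : ℤ) (hm : 0 ≤ m) :
    latticeCount 1 (b - 1) n m =
      ∑ r ∈ Finset.range n, eulerianNumber n r * intChoose (m + n - 1 - b * r) n :=
  eulerian_formula_positive_gains_general n hn b hb m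
end

section
/- Integral zero of the odd-order counting polynomials. Let b ≥ 2 and k ≥ 0 be integers and set n = 2k + 1. Then ∑_{r=0}^{n−1} A(n, r+1) · ∏_{i=0}^{n−1} ( (b−1)k + n − 1 − b·r − i ) = 0 (an identity in ℤ). Equivalently, the degree-n polynomial p(M) = ∑_{r=0}^{n−1} A(n, r+1) · C(M + n − 1 − b·r, n), where C(x,n) := x(x−1)⋯(x−n+1)/n! is the generalized binomial coefficient, has the integral zero M = (b−1)k. (The case b = 2 is the polynomial giving the Linial lattice-point count for large M.) -/
/-!
Composing a permutation with the reversal `i ↦ n - 1 - i` of the values turns its ascents into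
descents, so `A(n, r + 1) = A(n, n - r)`. With `n = 2k + 1` and `x_r = (b - 1)k + 2k - b r`,
one has `x_r + x_{2k - r} = n - 1`, so the falling factorials `x(x - 1)⋯(x - n + 1)` at `x_r` and
`x_{2k - r}` differ by the sign `(-1)^n = -1`. Hence the sum equals its own negative.
-/

open Finset

namespace Equiv.Perm

variable {n : ℕ}

def ascents (σ : Perm (Fin n)) : Set ℕ :=
  {i | ∃ h : i + 1 < n, σ ⟨i, Nat.lt_of_succ_lt h⟩ < σ ⟨i + 1, h⟩}

lemma ascents_subset_Iio (σ : Perm (Fin n)) : σ.ascents ⊆ Set.Iio (n - 1) := by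
  rintro i ⟨h, -⟩
  simp only [Set.mem_Iio]
  omega

lemma ncard_ascents_le (σ : Perm (Fin n)) : σ.ascents.ncard ≤ n - 1 :=
  (Set.ncard_le_ncard σ.ascents_subset_Iio).trans (Set.ncard_Iio_nat _).le

lemma ascents_revPerm_mul (σ : Perm (Fin n)) :
    (Fin.revPerm * σ).ascents = Set.Iio (n - 1) \ σ.ascents := by
  ext i
  simp only [ascents, Set.mem_ofPred_eq, Set.mem_sdiff, Set.mem_Iio, not_exists, not_lt,
    Perm.mul_apply, Fin.revPerm_apply, Fin.rev_lt_rev]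
  constructor
  · rintro ⟨h, hlt⟩
    exact ⟨by omega, fun _ => hlt.le⟩
  · rintro ⟨hi, hle⟩
    have h : i + 1 < n := by omega
    refine ⟨h, (hle h).lt_of_ne fun heq => ?_⟩
    simpa using σ.injective heq

lemma ncard_ascents_revPerm_mul (σ : Perm (Fin n)) :
    (Fin.revPerm * σ).ascents.ncard = n - 1 - σ.ascents.ncard := by
  rw [ascents_revPerm_mul, Set.ncard_sdiff' σ.ascents_subset_Iio, Set.ncard_Iio_nat]

end Equiv.Perm

open Equiv.Perm in
theorem eulerianNumber_symm {n r : ℕ} (hr : r ≤ n - 1) :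
    eulerianNumber n (n - 1 - r) = eulerianNumber n r := by
  refine Nat.card_congr ((Equiv.mulLeft Fin.revPerm).subtypeEquiv fun σ => ?_)
  change σ.ascents.ncard = n - 1 - r ↔ (Fin.revPerm * σ).ascents.ncard = r
  have := σ.ncard_ascents_le
  rw [ncard_ascents_revPerm_mul]
  omega

theorem prod_range_sub_of_add_eq {R : Type*} [CommRing R] {n : ℕ} {x y : R}
    (hxy : x + y = n - 1) :
    ∏ i ∈ range n, (y - i) = (-1) ^ n * ∏ i ∈ range n, (x - i) := by
  rw [← descPochhammer_eval_eq_prod_range, ← descPochhammer_eval_eq_prod_range,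
    ← ascPochhammer_eval_neg_eq_descPochhammer, descPochhammer_eval_eq_ascPochhammer]
  congr 1
  linear_combination hxy

theorem odd_order_integral_zero_general (b : ℤ) (k : ℕ) :
    ∑ r ∈ Finset.range (2 * k + 1),
      (eulerianNumber (2 * k + 1) r : ℤ) *
        ∏ i ∈ Finset.range (2 * k + 1),
          ((b - 1) * k + 2 * k - b * r - i) = 0 := by
  set f : ℕ → ℤ := fun r => (eulerianNumber (2 * k + 1) r : ℤ) *
    ∏ i ∈ range (2 * k + 1), ((b - 1) * k + 2 * k - b * r - i)
  have hreflect : ∀ r ∈ range (2 * k + 1), f (2 * k + 1 - 1 - r) = -f r := by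
    intro r hr
    replace hr : r ≤ 2 * k + 1 - 1 := Nat.le_of_lt_succ (mem_range.mp hr)
    simp only [f, eulerianNumber_symm hr]
    rw [prod_range_sub_of_add_eq (x := (b - 1) * k + 2 * k - b * r)
        (by rw [Nat.cast_sub hr]; push_cast; ring),
      Odd.neg_one_pow ⟨k, rfl⟩]
    ring
  refine CharZero.eq_neg_self_iff.mp ?_
  calc ∑ r ∈ range (2 * k + 1), f r
      = ∑ r ∈ range (2 * k + 1), f (2 * k + 1 - 1 - r) := (sum_range_reflect f _).symm
    _ = -∑ r ∈ range (2 * k + 1), f r := by rw [sum_congr rfl hreflect, sum_neg_distrib]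

/-- **Integral zero of the odd-order counting polynomials.**  For integers `b ≥ 2` and `k ≥ 0`,
with `n = 2k + 1`:
`∑_{r=0}^{n−1} A(n, r+1) ∏_{i=0}^{n−1} ((b−1)k + n − 1 − b r − i) = 0` in `ℤ`; that is, the
degree-`n` polynomial `∑_r A(n, r+1) C(M + n − 1 − b r, n)` (with `C` the generalized binomial
coefficient) has the integral zero `M = (b − 1)k`. -/
theorem odd_order_integral_zero (b : ℤ) (hb : 2 ≤ b) (k : ℕ) :
    ∑ r ∈ Finset.range (2 * k + 1),
      (eulerianNumber (2 * k + 1) r : ℤ) *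
        ∏ i ∈ Finset.range (2 * k + 1),
          ((b - 1) * k + 2 * k - b * r - i) = 0 :=
  odd_order_integral_zero_general b k
end

section
/- Eventual polynomiality of the lattice-point count. Let n ≥ 1 and let E be an integral gain graph on vertex set {1,…,n}, and for an integer m ≥ 0 let f(m) be the number of proper maps x : {1,…,n} → {1,2,…,m} (equivalently, the number of integer points of [1,m]^n lying on none of the hyperplanes x_j = x_i + g for (i,j,g) ∈ E). Then there exist a monic polynomial p ∈ ℤ[X] of degree n and an integer M₀ ≥ 0 such that f(m) = p(m) for every integer m ≥ M₀. -/
open Finset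
open scoped Classical

/-- An edge of an integral gain graph on `Fin n`: the triple `(i, j, g)` represents an edge
from `i` to `j` with gain `g`. -/
abbrev GainEdge (n : ℕ) := Fin n × Fin n × ℤ

/-- `θ` is a potential for the edge set `S`: `θ j - θ i = g` for every edge `(i, j, g) ∈ S`. -/
def IsPotential {n : ℕ} (S : Finset (GainEdge n)) (θ : Fin n → ℤ) : Prop :=
  ∀ e ∈ S, θ e.2.1 - θ e.1 = e.2.2

/-- An edge set is balanced if it admits a potential. -/
def IsBalanced {n : ℕ} (S : Finset (GainEdge n)) : Prop :=
  ∃ θ : Fin n → ℤ, IsPotential S θ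

/-- Two vertices lie in the same connected component of (the underlying graph of) `S`. -/
def SameComp {n : ℕ} (S : Finset (GainEdge n)) (u v : Fin n) : Prop :=
  Relation.EqvGen (fun a b => ∃ g : ℤ, (a, b, g) ∈ S) u v

/-- The partition `π(S)` of the vertex set into the connected components of `S`,
represented as the finite set of its blocks. -/
noncomputable def blocks {n : ℕ} (S : Finset (GainEdge n)) : Finset (Finset (Fin n)) :=
  Finset.univ.image fun v => Finset.univ.filter fun u => SameComp S u v

/-- A balanced edge set `B ⊆ E` is closed (in `E`) if adjoining to `B` any edge of `E ∖ B` whose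
endpoints lie in the same block of `π(B)` destroys balance. -/
def GGClosed {n : ℕ} (E B : Finset (GainEdge n)) : Prop :=
  ∀ e ∈ E \ B, SameComp B e.1 e.2.1 → ¬ IsBalanced (insert e B)

/-- The poset `Lat^b(E)` of closed balanced subsets of `E` (as a finite set, ordered by
inclusion). -/
noncomputable def Latb {n : ℕ} (E : Finset (GainEdge n)) : Finset (Finset (GainEdge n)) :=
  E.powerset.filter fun B => IsBalanced B ∧ GGClosed E B

/-- A coloration `x` is proper for `E` if `x j ≠ x i + g` for every edge `(i, j, g) ∈ E`. -/
def ProperFor {n : ℕ} (E : Finset (GainEdge n)) (x : Fin n → ℤ) : Prop :=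
  ∀ e ∈ E, x e.2.1 ≠ x e.1 + e.2.2

/-- The number of proper colorations of `E` with colors in `{1, …, m}`. -/
noncomputable def properCount {n : ℕ} (E : Finset (GainEdge n)) (m : ℤ) : ℕ :=
  Nat.card {x : Fin n → ℤ // (∀ v, 1 ≤ x v ∧ x v ≤ m) ∧ ProperFor E x}
/-!
By inclusion–exclusion over the subsets `S ⊆ E`, the count of proper colourings is the
alternating sum of the numbers of points of the box `[1, m]^n` on the flats
`⋂_{(i,j,g) ∈ S} {x_j = x_i + g}`, i.e. of the integer potentials of `S` in the box. Such a flat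
is empty unless `S` is balanced; if `θ` is a potential of `S`, the others are `θ + c ∘ π` with
`π` the projection onto the connected components of `S`, so for large `m` their number in the box
is `∏ (m - d)` over the components, `d` being the spread of `θ` on the component. The term
`S = ∅` contributes `m ^ n`, while each nonempty `S ⊆ E` contains an edge `i < j` and hence has
fewer than `n` components, so only lower-order terms are added to `m ^ n`.
-/

open Fintype Function Polynomial Filter

theorem card_filter_forall_not_eq_sum_powerset {α ι : Type*} (B : Finset α) (s : Finset ι)
    (P : ι → α → Prop) :
    (#{a ∈ B | ∀ i ∈ s, ¬ P i a} : ℤ) =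
      ∑ t ∈ s.powerset, (-1) ^ #t * (#{a ∈ B | ∀ i ∈ t, P i a} : ℤ) := by
  have pointwise (a : α) : ∑ t ∈ s.powerset, (-1 : ℤ) ^ #t * (if ∀ i ∈ t, P i a then 1 else 0)
      = if ∀ i ∈ s, ¬ P i a then 1 else 0 := by
    have hfilter : s.powerset.filter (fun t => ∀ i ∈ t, P i a) = (s.filter (P · a)).powerset := by
      ext t
      simp only [mem_filter, mem_powerset, subset_iff]
      grind
    simp only [mul_ite, mul_one, mul_zero, ← sum_filter, hfilter, sum_powerset_neg_one_pow_card,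
      filter_eq_empty_iff]
  simp only [card_filter, Nat.cast_sum, Nat.cast_ite, Nat.cast_one, Nat.cast_zero]
  simp_rw [mul_sum]
  rw [sum_comm]
  exact sum_congr rfl fun a _ => (pointwise a).symm

theorem exists_card_filter_exists_eq_add_comp {α β : Type*} [Fintype α] [DecidableEq α]
    [Fintype β] {π : α → β} (hπ : Surjective π) (θ : α → ℤ) :
    ∃ d : β → ℤ, ∀ m : ℤ,
      #{x ∈ piFinset fun _ => Icc 1 m | ∃ c : β → ℤ, x = θ + c ∘ π} = ∏ b, (m - d b).toNat := by
  have hfiber (b : β) : (univ.filter (π · = b)).Nonempty := by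
    obtain ⟨a, rfl⟩ := hπ b
    exact ⟨a, by simp⟩
  set lo := fun b => (univ.filter (π · = b)).inf' (hfiber b) θ
  set hi := fun b => (univ.filter (π · = b)).sup' (hfiber b) θ
  refine ⟨hi - lo, fun m => ?_⟩
  have hmem (c : β → ℤ) : θ + c ∘ π ∈ piFinset (fun _ => Icc 1 m) ↔
      c ∈ piFinset fun b => Icc (1 - lo b) (m - hi b) := by
    simp only [mem_piFinset, mem_Icc, Pi.add_apply, comp_apply]
    constructor
    · intro h b
      obtain ⟨a₁, ha₁, hlo⟩ := exists_mem_eq_inf' (hfiber b) θ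
      obtain ⟨a₂, ha₂, hhi⟩ := exists_mem_eq_sup' (hfiber b) θ
      have h₁ := h a₁
      have h₂ := h a₂
      rw [(mem_filter.1 ha₁).2] at h₁
      rw [(mem_filter.1 ha₂).2] at h₂
      change lo b = θ a₁ at hlo
      change hi b = θ a₂ at hhi
      omega
    · intro h a
      have ha : a ∈ univ.filter (π · = π a) := by simp
      have h₁ : lo (π a) ≤ θ a := inf'_le θ ha
      have h₂ : θ a ≤ hi (π a) := le_sup' θ ha
      have := h (π a)
      omega
  have hinj : Injective fun c : β → ℤ => θ + c ∘ π := fun c c' h => by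
    funext b
    obtain ⟨a, rfl⟩ := hπ b
    simpa using congrFun h a
  have himage : {x ∈ piFinset fun _ : α => Icc 1 m | ∃ c : β → ℤ, x = θ + c ∘ π} =
      (piFinset fun b => Icc (1 - lo b) (m - hi b)).image fun c => θ + c ∘ π := by
    ext x
    simp only [mem_filter, mem_image, ← hmem]
    grind
  rw [himage, card_image_of_injective _ hinj, card_piFinset]
  refine prod_congr rfl fun b _ => ?_
  rw [Int.card_Icc, Pi.sub_apply]
  ring_nf

theorem eventually_prod_toNat_sub_eq_eval {β : Type*} [Fintype β] (d : β → ℤ) :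
    ∀ᶠ m in atTop, ((∏ b, (m - d b).toNat : ℕ) : ℤ) = (∏ b, (X - C (d b))).eval m := by
  filter_upwards [eventually_all.2 fun b => eventually_ge_atTop (d b)] with m hm
  push_cast
  rw [eval_prod]
  exact prod_congr rfl fun b _ => by simp [Int.toNat_of_nonneg (sub_nonneg.2 (hm b))]

section GainGraph

variable {n : ℕ}

def componentSetoid (S : Finset (GainEdge n)) : Setoid (Fin n) :=
  ⟨SameComp S, Relation.EqvGen.is_equivalence _⟩

abbrev Components (S : Finset (GainEdge n)) : Type := Quotient (componentSetoid S)

theorem card_components_lt {S : Finset (GainEdge n)} {e : GainEdge n} (he : e ∈ S)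
    (hloop : e.1 ≠ e.2.1) : Fintype.card (Components S) < n := by
  have hmk : (⟦e.1⟧ : Components S) = ⟦e.2.1⟧ :=
    Quotient.sound (Relation.EqvGen.rel _ _ ⟨e.2.2, he⟩)
  simpa using Fintype.card_lt_of_surjective_not_injective _ Quotient.mk_surjective
    fun hinj => hloop (hinj hmk)

theorem IsPotential.sub_eq_sub_of_sameComp {S : Finset (GainEdge n)} {x θ : Fin n → ℤ}
    (hx : IsPotential S x) (hθ : IsPotential S θ) {u v : Fin n} (h : SameComp S u v) :
    x u - θ u = x v - θ v := by
  induction h with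
  | rel a b hab =>
    obtain ⟨g, hg⟩ := hab
    have hxg := hx _ hg
    have hθg := hθ _ hg
    dsimp only at hxg hθg
    omega
  | refl => rfl
  | symm _ _ _ ih => exact ih.symm
  | trans _ _ _ _ _ ih₁ ih₂ => exact ih₁.trans ih₂

theorem IsPotential.isPotential_iff_exists_eq_add_comp {S : Finset (GainEdge n)}
    {θ : Fin n → ℤ} (hθ : IsPotential S θ) {x : Fin n → ℤ} :
    IsPotential S x ↔ ∃ c : Components S → ℤ, x = θ + c ∘ Quotient.mk _ := by
  constructor
  · intro hx
    refine ⟨fun q => x q.out - θ q.out, funext fun v => ?_⟩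
    have := hx.sub_eq_sub_of_sameComp hθ (Quotient.mk_out (s := componentSetoid S) v)
    simp only [Pi.add_apply, comp_apply]
    omega
  · rintro ⟨c, rfl⟩ e he
    have hmk : (⟦e.1⟧ : Components S) = ⟦e.2.1⟧ :=
      Quotient.sound (Relation.EqvGen.rel _ _ ⟨e.2.2, he⟩)
    have := hθ e he
    simp only [Pi.add_apply, comp_apply, hmk]
    omega

noncomputable def potentialCount (S : Finset (GainEdge n)) (m : ℤ) : ℕ :=
  #{x ∈ piFinset fun _ : Fin n => Icc 1 m | IsPotential S x}

theorem exists_eventually_potentialCount_eq_eval (S : Finset (GainEdge n)) :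
    ∃ q : ℤ[X], q.natDegree ≤ Fintype.card (Components S) ∧
      ∀ᶠ m in atTop, (potentialCount S m : ℤ) = q.eval m := by
  by_cases hS : IsBalanced S
  · obtain ⟨θ, hθ⟩ := hS
    obtain ⟨d, hd⟩ := exists_card_filter_exists_eq_add_comp
      (Quotient.mk_surjective (s := componentSetoid S)) θ
    refine ⟨∏ q, (X - C (d q)), (natDegree_finsetProd_X_sub_C_eq_card _ _).le, ?_⟩
    filter_upwards [eventually_prod_toNat_sub_eq_eval d] with m hm
    rw [← hm, ← hd, potentialCount]
    simp_rw [hθ.isPotential_iff_exists_eq_add_comp]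
  · refine ⟨0, by simp, Eventually.of_forall fun m => ?_⟩
    simp only [potentialCount, eval_zero, Nat.cast_eq_zero, Finset.card_eq_zero,
      filter_eq_empty_iff]
    exact fun x _ hx => hS ⟨x, hx⟩

theorem potentialCount_empty {m : ℤ} (hm : 0 ≤ m) :
    (potentialCount (∅ : Finset (GainEdge n)) m : ℤ) = m ^ n := by
  simp [potentialCount, IsPotential, card_piFinset, Int.toNat_of_nonneg hm]

theorem properCount_eq_sum_potentialCount (E : Finset (GainEdge n)) (m : ℤ) :
    (properCount E m : ℤ) = ∑ S ∈ E.powerset, (-1) ^ #S * (potentialCount S m : ℤ) := by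
  have hcard : properCount E m = #{x ∈ piFinset fun _ : Fin n => Icc 1 m | ProperFor E x} := by
    rw [properCount, ← Nat.card_eq_finsetCard]
    exact Nat.card_congr <| Equiv.subtypeEquivRight fun x => by simp [mem_piFinset]
  rw [hcard]
  convert card_filter_forall_not_eq_sum_powerset (piFinset fun _ : Fin n => Icc 1 m) E
    fun e (x : Fin n → ℤ) => x e.2.1 - x e.1 = e.2.2 using 3
  · ext x
    simp only [mem_filter]
    exact and_congr_right fun _ => forall₂_congr fun e _ => by omega
  · unfold potentialCount IsPotential
    congr!

end GainGraph

theorem eventual_polynomiality_general (n : ℕ) (E : Finset (GainEdge n))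
    (hE : ∀ e ∈ E, e.1 < e.2.1) :
    ∃ p : Polynomial ℤ, p.Monic ∧ p.natDegree = n ∧
      ∃ M₀ : ℤ, 0 ≤ M₀ ∧ ∀ m : ℤ, M₀ ≤ m → (properCount E m : ℤ) = p.eval m := by
  choose q hq_deg hq_eval using exists_eventually_potentialCount_eq_eval (n := n)
  set r := ∑ S ∈ E.powerset.erase ∅, (-1 : ℤ) ^ #S • q S
  have hr : r.degree < n := by
    refine mem_degreeLT.1 <| Submodule.sum_mem _ fun S hS => Submodule.smul_mem _ _ ?_
    obtain ⟨hS, hSE⟩ := mem_erase.1 hS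
    obtain ⟨e, he⟩ := nonempty_iff_ne_empty.2 hS
    have hlt := card_components_lt he (hE e (mem_powerset.1 hSE he)).ne
    exact mem_degreeLT.2 <|
      degree_le_natDegree.trans_lt (by exact_mod_cast (hq_deg S).trans_lt hlt)
  have hcount : ∀ᶠ m in atTop, (properCount E m : ℤ) = (X ^ n + r).eval m := by
    filter_upwards [eventually_ge_atTop 0,
      (eventually_all_finset E.powerset).2 fun S _ => hq_eval S] with m hm₀ hm
    rw [properCount_eq_sum_potentialCount, ← add_sum_erase _ _ (empty_mem_powerset E),
      eval_add, eval_finsetSum, eval_pow, eval_X]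
    congr 1
    · simp [potentialCount_empty hm₀]
    · refine sum_congr rfl fun S hS => ?_
      rw [eval_smul, hm S (mem_of_mem_erase hS), smul_eq_mul]
  obtain ⟨M, hM⟩ := eventually_atTop.1 hcount
  refine ⟨X ^ n + r, monic_X_pow_add hr, ?_, max M 0, le_max_right _ _,
    fun m hm => hM m (le_of_max_le_left hm)⟩
  rw [natDegree_add_eq_left_of_degree_lt (by rwa [degree_X_pow]), natDegree_X_pow]

/-- **Eventual polynomiality of the lattice-point count.**  For an integral gain graph `E` on
`{1, …, n}` (`n ≥ 1`), the number of proper colorations with colors in `{1, …, m}`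
(equivalently, the number of integer points of `[1, m]^n` on none of the hyperplanes
`x j = x i + g` for `(i, j, g) ∈ E`) agrees, for all sufficiently large `m ≥ M₀ ≥ 0`, with a
monic polynomial of degree `n` with integer coefficients. -/
theorem eventual_polynomiality (n : ℕ) (hn : 1 ≤ n) (E : Finset (GainEdge n))
    (hE : ∀ e ∈ E, e.1 < e.2.1) :
    ∃ p : Polynomial ℤ, p.Monic ∧ p.natDegree = n ∧
      ∃ M₀ : ℤ, 0 ≤ M₀ ∧ ∀ m : ℤ, M₀ ≤ m → (properCount E m : ℤ) = p.eval m :=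
  eventual_polynomiality_general n E hE
end
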